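/- arXiv:2603.07894 — 2 statements merged into one kernel-verified Lean document; each statement's English description precedes it below -/
import Mathlib

section
/- For every positive integer l, every vector v ∈ ℝ^l, and every ε ∈ (0, 1/2), there exists a vertex χ ∈ {0,1}^l of the unit cube and infinitely many positive integers N such that |{N·v_i} - χ_i| < ε for all 1 ≤ i ≤ l, where {x} = x - ⌊x⌋ denotes the fractional part. -/
/-- If `x` is within `ε < 1` of an integer, its fractional part is near `0` or near `1`. -/
lemma fract_near_int (x : ℝ) (m : ℤ) (ε : ℝ) (hε1 : ε < 1) (h : |x - m| < ε) :
    Int.fract x < ε ∨ 1 - ε < Int.fract x := by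
  rw [abs_lt] at h
  rcases le_or_gt (m : ℝ) x with hle | hlt
  · left
    have hf : ⌊x⌋ = m := by
      rw [Int.floor_eq_iff]
      refine ⟨by exact_mod_cast hle, by linarith [h.2]⟩
    rw [Int.fract, hf]
    linarith [h.2]
  · right
    have hf : ⌊x⌋ = m - 1 := by
      rw [Int.floor_eq_iff]
      push_cast
      constructor
      · linarith [h.1]
      · linarith
    rw [Int.fract, hf]
    push_cast
    linarith [h.1]

/-- The key difference estimate: if the boxes agree, `(b - a) * v i` is near an integer. -/
lemma near_int_of_floor_eq (v : ℝ) (K : ℕ) (hKR : (0 : ℝ) < K) (a b : ℕ) (hab : a < b)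
    (hfloor : ⌊Int.fract ((a : ℝ) * v) * K⌋ = ⌊Int.fract ((b : ℝ) * v) * K⌋) :
    ∃ m : ℤ, |((b - a : ℕ) : ℝ) * v - m| < 1 / K := by
  have hfr : |Int.fract ((a : ℝ) * v) * K - Int.fract ((b : ℝ) * v) * K| < 1 :=
    Int.abs_sub_lt_one_of_floor_eq_floor hfloor
  have hfr2 : |Int.fract ((b : ℝ) * v) - Int.fract ((a : ℝ) * v)| < 1 / K := by
    rw [abs_sub_comm] at hfr
    rw [← sub_mul, abs_mul, abs_of_pos hKR] at hfr
    rw [lt_div_iff₀ hKR]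
    exact hfr
  refine ⟨⌊(b : ℝ) * v⌋ - ⌊(a : ℝ) * v⌋, ?_⟩
  have hcast : ((b - a : ℕ) : ℝ) = (b : ℝ) - (a : ℝ) := by
    push_cast [Nat.cast_sub hab.le]; ring
  have key : ((b - a : ℕ) : ℝ) * v - ((⌊(b : ℝ) * v⌋ - ⌊(a : ℝ) * v⌋ : ℤ) : ℝ)
      = Int.fract ((b : ℝ) * v) - Int.fract ((a : ℝ) * v) := by
    rw [hcast, Int.fract, Int.fract]
    push_cast
    ring
  rw [key]
  exact hfr2

/-- Dirichlet-type simultaneous approximation: arbitrarily large `N` with all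
`N * v i` within `ε` of an integer. -/
lemma dirichlet_step (l : ℕ) (v : Fin l → ℝ) (ε : ℝ) (hε : 0 < ε) (B : ℕ) :
    ∃ N : ℕ, B < N ∧ ∀ i, ∃ m : ℤ, |(N : ℝ) * v i - m| < ε := by
  obtain ⟨K, hK⟩ := exists_nat_gt (1 / ε)
  have hKR : (0 : ℝ) < K := lt_trans (by positivity) hK
  have hK0 : 0 < K := by exact_mod_cast hKR
  have hbox : ∀ n : ℕ, ∀ i : Fin l,
      (⌊Int.fract ((n : ℝ) * v i) * K⌋).toNat < K := by
    intro n i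
    have h1 : Int.fract ((n : ℝ) * v i) * K < K := by
      have := Int.fract_lt_one ((n : ℝ) * v i)
      nlinarith
    have : ⌊Int.fract ((n : ℝ) * v i) * K⌋ < (K : ℤ) := by
      rw [Int.floor_lt]; exact_mod_cast h1
    omega
  have hfloor_nonneg : ∀ n : ℕ, ∀ i : Fin l,
      0 ≤ ⌊Int.fract ((n : ℝ) * v i) * K⌋ := fun n i =>
    Int.floor_nonneg.mpr (mul_nonneg (Int.fract_nonneg _) hKR.le)
  set g : Fin (K ^ l + 1) → (Fin l → Fin K) := fun n i =>
    ⟨(⌊Int.fract (((((n : ℕ) * (B + 1)) : ℕ) : ℝ) * v i) * K⌋).toNat, hbox _ i⟩ with hg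
  obtain ⟨x, y, hxy, hgxy⟩ := Fintype.exists_ne_map_eq_of_card_lt g
    (by simp [Fintype.card_fun])
  wlog hlt : (x : ℕ) < (y : ℕ) generalizing x y
  · refine this y x hxy.symm hgxy.symm ?_
    rcases lt_or_gt_of_ne (fun h => hxy (Fin.ext h)) with h | h
    · exact absurd h hlt
    · exact h
  have hab : (x : ℕ) * (B + 1) < (y : ℕ) * (B + 1) :=
    Nat.mul_lt_mul_of_lt_of_le hlt (le_refl _) (by omega)
  refine ⟨(y : ℕ) * (B + 1) - (x : ℕ) * (B + 1), ?_, ?_⟩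
  · have h1 : ((x : ℕ) + 1) * (B + 1) ≤ (y : ℕ) * (B + 1) :=
      Nat.mul_le_mul_right _ hlt
    have h2 : (x : ℕ) * (B + 1) + (B + 1) = ((x : ℕ) + 1) * (B + 1) := by ring
    omega
  · intro i
    have h1 : g x i = g y i := congrFun hgxy i
    have h2 : (⌊Int.fract (((((x : ℕ) * (B + 1)) : ℕ) : ℝ) * v i) * K⌋).toNat
        = (⌊Int.fract (((((y : ℕ) * (B + 1)) : ℕ) : ℝ) * v i) * K⌋).toNat := by
      simpa only [hg] using congrArg Fin.val h1
    have h3 : ⌊Int.fract (((((x : ℕ) * (B + 1)) : ℕ) : ℝ) * v i) * K⌋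
        = ⌊Int.fract (((((y : ℕ) * (B + 1)) : ℕ) : ℝ) * v i) * K⌋ := by
      have := hfloor_nonneg ((x : ℕ) * (B + 1)) i
      have := hfloor_nonneg ((y : ℕ) * (B + 1)) i
      omega
    obtain ⟨m, hm⟩ := near_int_of_floor_eq (v i) K hKR _ _ hab h3
    refine ⟨m, lt_trans hm ?_⟩
    rw [div_lt_iff₀ hKR]
    rw [div_lt_iff₀ hε] at hK
    nlinarith

theorem simultaneous_fractional_approximation (l : ℕ) (hl : 0 < l)
    (v : Fin l → ℝ) (ε : ℝ) (hε : ε ∈ Set.Ioo (0 : ℝ) (1 / 2)) :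
    ∃ χ : Fin l → ℤ, (∀ i, χ i = 0 ∨ χ i = 1) ∧
      {N : ℕ | 0 < N ∧ ∀ i, |Int.fract ((N : ℝ) * v i) - (χ i : ℝ)| < ε}.Infinite := by
  obtain ⟨hε0, hε2⟩ := hε
  have hε1 : ε < 1 := by linarith
  set S : Set ℕ := {N : ℕ | 0 < N ∧
      ∀ i, Int.fract ((N : ℝ) * v i) < ε ∨ 1 - ε < Int.fract ((N : ℝ) * v i)} with hS
  have hSinf : S.Infinite := by
    apply Set.infinite_of_not_bddAbove
    rintro ⟨ub, hub⟩
    obtain ⟨N, hN, hNi⟩ := dirichlet_step l v ε hε0 (ub + 1)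
    have hNS : N ∈ S := by
      refine ⟨by omega, fun i => ?_⟩
      obtain ⟨m, hm⟩ := hNi i
      exact fract_near_int _ m ε hε1 hm
    have := hub hNS
    omega
  haveI := hSinf.to_subtype
  set f : ↥S → (Fin l → Bool) :=
    fun N => fun i => decide (Int.fract (((N : ℕ) : ℝ) * v i) < ε) with hf
  obtain ⟨c, hc⟩ := Finite.exists_infinite_fiber f
  refine ⟨fun i => if c i then 0 else 1, fun i => by dsimp only; split <;> simp, ?_⟩
  have hpre : (f ⁻¹' {c}).Infinite := Set.infinite_coe_iff.mp hc
  have himg : (Subtype.val '' (f ⁻¹' {c})).Infinite :=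
    hpre.image (Subtype.val_injective.injOn)
  refine himg.mono ?_
  rintro N ⟨⟨N', hN'⟩, hfib, rfl⟩
  simp only [Set.mem_preimage, Set.mem_singleton_iff] at hfib
  refine ⟨hN'.1, fun i => ?_⟩
  have hci : decide (Int.fract ((N' : ℝ) * v i) < ε) = c i := congrFun hfib i
  by_cases hb : c i = true
  · have hci' : Int.fract ((N' : ℝ) * v i) < ε := of_decide_eq_true (hci.trans hb)
    simp only [hb, if_true]
    push_cast
    rw [sub_zero, abs_of_nonneg (Int.fract_nonneg _)]
    exact hci'
  · have hfalse : c i = false := Bool.eq_false_iff.mpr hb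
    have hci' : ¬ Int.fract ((N' : ℝ) * v i) < ε :=
      of_decide_eq_false (hci.trans hfalse)
    have h2 : 1 - ε < Int.fract ((N' : ℝ) * v i) := (hN'.2 i).resolve_left hci'
    have h3 := Int.fract_lt_one ((N' : ℝ) * v i)
    simp only [hfalse, if_false]
    push_cast
    rw [abs_lt]
    constructor <;> linarith
end

section
/- Let n ≥ 2 and let nonnegative integers satisfy p_- + p_0 + p_+ + q_- + q_0 + q_+ + r + 2r* + 2r_0 + h = n. Suppose μ and μ̂ are real numbers with μ - μ̂ = Σ_{j=1}^{r}(2⌈θ_j/(2π)⌉ - θ_j/π) - r - (p_- + p_0) + 2Σ_{j=1}^{r*}(φ(α_j/(2π)) - 1), where θ_j ∈ (0, 2π) for 1 ≤ j ≤ r, α_j ∈ (0,2π) for 1 ≤ j ≤ r*, and φ(a) = ⌈a⌉ - ⌊a⌋ ∈ {0,1}. Then |μ - μ̂| ≤ n, and if |μ - μ̂| = n then p_- + p_0 = n. -/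
open Real

lemma unit_ceil_floor {x : ℝ} (hx : x ∈ Set.Ioo (0:ℝ) 1) : ⌈x⌉ = 1 ∧ ⌊x⌋ = 0 := by
  constructor
  · rw [Int.ceil_eq_iff]
    push_cast
    exact ⟨by linarith [hx.1], hx.2.le⟩
  · rw [Int.floor_eq_zero_iff]
    exact ⟨hx.1.le, hx.2⟩

theorem index_mean_index_gap (n : ℕ) (hn : 2 ≤ n)
    (pm p0 pp qm q0 qp r rstar r0 h : ℕ)
    (hsum : pm + p0 + pp + qm + q0 + qp + r + 2 * rstar + 2 * r0 + h = n)
    (θ : Fin r → ℝ) (hθ : ∀ j, θ j ∈ Set.Ioo (0 : ℝ) (2 * π))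
    (α : Fin rstar → ℝ) (hα : ∀ j, α j ∈ Set.Ioo (0 : ℝ) (2 * π))
    (μ μhat : ℝ)
    (hformula : μ - μhat =
      (∑ j, (2 * (⌈θ j / (2 * π)⌉ : ℝ) - θ j / π)) - r - (pm + p0 : ℝ)
        + 2 * ∑ j, ((⌈α j / (2 * π)⌉ : ℝ) - (⌊α j / (2 * π)⌋ : ℝ) - 1)) :
    |μ - μhat| ≤ n ∧ (|μ - μhat| = n → pm + p0 = n) := by
  have hπ : (0:ℝ) < π := pi_pos
  have h2π : (0:ℝ) < 2 * π := by linarith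
  -- each α-term is zero
  have hαmem : ∀ j, α j / (2 * π) ∈ Set.Ioo (0:ℝ) 1 := fun j =>
    ⟨div_pos (hα j).1 h2π, (div_lt_one h2π).2 (hα j).2⟩
  have hαzero : ∀ j, ((⌈α j / (2 * π)⌉ : ℝ) - (⌊α j / (2 * π)⌋ : ℝ) - 1) = 0 := by
    intro j
    obtain ⟨hc, hf⟩ := unit_ceil_floor (hαmem j)
    rw [hc, hf]; norm_num
  have hθceil : ∀ j, (⌈θ j / (2 * π)⌉ : ℝ) = 1 := by
    intro j
    have := (unit_ceil_floor ⟨div_pos (hθ j).1 h2π, (div_lt_one h2π).2 (hθ j).2⟩).1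
    exact_mod_cast congrArg (Int.cast : ℤ → ℝ) this
  have hform : μ - μhat = (∑ j, (2 - θ j / π)) - r - (pm + p0 : ℝ) := by
    rw [hformula, Finset.sum_congr rfl (fun j _ => hαzero j)]
    simp [hθceil]
  set S : ℝ := ∑ j, (2 - θ j / π) with hSdef
  have hterm : ∀ j : Fin r, 0 < 2 - θ j / π ∧ 2 - θ j / π < 2 := by
    intro j
    have h1 : θ j / π < 2 := (div_lt_iff₀ hπ).2 (by linarith [(hθ j).2])
    have h2 : 0 < θ j / π := div_pos (hθ j).1 hπ
    constructor <;> linarith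
  have hS0 : 0 ≤ S := Finset.sum_nonneg fun j _ => (hterm j).1.le
  have hS2 : S ≤ 2 * r := by
    calc S ≤ ∑ _j : Fin r, (2:ℝ) := Finset.sum_le_sum fun j _ => (hterm j).2.le
    _ = 2 * r := by simp [mul_comm]
  have hnat : (pm + p0 + r : ℝ) ≤ n := by
    have : pm + p0 + r ≤ n := by omega
    exact_mod_cast this
  have hpm0 : (0:ℝ) ≤ (pm + p0 : ℝ) := by positivity
  have habs : |μ - μhat| ≤ n := by
    rw [abs_le]
    constructor <;> rw [hform] <;> push_cast <;> push_cast at hnat <;> linarith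
  refine ⟨habs, fun heq => ?_⟩
  rcases Nat.eq_zero_or_pos r with hr | hr
  · subst hr
    have hS : S = 0 := by simp [hSdef]
    have : |μ - μhat| = (pm + p0 : ℝ) := by
      rw [hform, hS, show (0:ℝ) - (0:ℕ) - ((pm:ℝ) + p0) = -((pm:ℝ) + p0) by push_cast; ring,
        abs_neg, abs_of_nonneg hpm0]
    rw [this] at heq
    exact_mod_cast heq
  · exfalso
    have hne : (Finset.univ : Finset (Fin r)).Nonempty := by
      simpa [Finset.univ_nonempty_iff, ← Fin.pos_iff_nonempty] using hr
    have hS0' : 0 < S := Finset.sum_pos (fun j _ => (hterm j).1) hne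
    have hS2' : S < 2 * r := by
      calc S < ∑ _j : Fin r, (2:ℝ) :=
        Finset.sum_lt_sum_of_nonempty hne fun j _ => (hterm j).2
      _ = 2 * r := by simp [mul_comm]
    have : |μ - μhat| < n := by
      rw [abs_lt]
      constructor <;> rw [hform] <;> push_cast <;> push_cast at hnat <;> linarith
    linarith [heq ▸ this]
end
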